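/- arXiv:1305.5900 — 2 statements merged into one kernel-verified Lean document; each statement's English description precedes it below -/
import Mathlib

section
/- Let Λ be a row-finite k-graph without sources. Then the following are equivalent: (1) for every x ∈ Λ^∞, the shift-equivalence class [x] is a locally closed subset of Λ^∞ in the cylinder topology; (2) for every x ∈ Λ^∞ there exists n ∈ ℕ^k such that every path in x(n)Λ^∞ that is frequently divertable to [x] is shift equivalent to x. -/
/-- A `k`-graph: a countable small category (objects being identified with their
identity morphisms, so that the morphism set `M` carries everything) together with a
degree functor `d : Λ → ℕ^k` satisfying the unique factorisation property. -/
structure KGraph (k : ℕ) : Type 1 where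
  M : Type
  countableM : Countable M
  rng : M → M
  src : M → M
  comp : M → M → M
  d : M → Fin k → ℕ
  src_src : ∀ a, src (src a) = src a
  rng_src : ∀ a, rng (src a) = src a
  src_rng : ∀ a, src (rng a) = rng a
  rng_rng : ∀ a, rng (rng a) = rng a
  comp_src_self : ∀ a, comp a (src a) = a
  rng_comp_self : ∀ a, comp (rng a) a = a
  rng_comp : ∀ a b, src a = rng b → rng (comp a b) = rng a
  src_comp : ∀ a b, src a = rng b → src (comp a b) = src b
  comp_assoc : ∀ a b c, src a = rng b → src b = rng c →
    comp (comp a b) c = comp a (comp b c)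
  d_src : ∀ a, d (src a) = 0
  d_comp : ∀ a b, src a = rng b → d (comp a b) = d a + d b
  factor : ∀ a (m n : Fin k → ℕ), d a = m + n →
    ∃! p : M × M, src p.1 = rng p.2 ∧ comp p.1 p.2 = a ∧ d p.1 = m ∧ d p.2 = n

namespace KGraph

variable {k : ℕ}

/-- The objects of `Λ`, identified with the identity morphisms. -/
def IsObj (Λ : KGraph k) (v : Λ.M) : Prop := Λ.rng v = v

/-- `Λ` is row-finite: each `vΛ^m` is finite. -/
def RowFinite (Λ : KGraph k) : Prop :=
  ∀ v, Λ.IsObj v → ∀ m : Fin k → ℕ, {a : Λ.M | Λ.rng a = v ∧ Λ.d a = m}.Finite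

/-- `Λ` has no sources: each `vΛ^m` is nonempty. -/
def NoSources (Λ : KGraph k) : Prop :=
  ∀ v, Λ.IsObj v → ∀ m : Fin k → ℕ, ∃ a : Λ.M, Λ.rng a = v ∧ Λ.d a = m

end KGraph

/-- An infinite path of a `k`-graph `Λ`: a degree-preserving functor `x : Ω_k → Λ`,
recorded by its values `seg m n _ = x(m, n)` on the morphisms `(m, n)` (for `m ≤ n`)
of `Ω_k`; the vertex `x(m)` is `seg m m _`. -/
structure InfPath {k : ℕ} (Λ : KGraph k) where
  seg : ∀ m n : Fin k → ℕ, m ≤ n → Λ.M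
  d_seg : ∀ m n (h : m ≤ n), Λ.d (seg m n h) = n - m
  rng_seg : ∀ m n (h : m ≤ n), Λ.rng (seg m n h) = seg m m le_rfl
  src_seg : ∀ m n (h : m ≤ n), Λ.src (seg m n h) = seg n n le_rfl
  comp_seg : ∀ m n p (h1 : m ≤ n) (h2 : n ≤ p),
    Λ.comp (seg m n h1) (seg n p h2) = seg m p (h1.trans h2)

namespace InfPath

variable {k : ℕ} {Λ : KGraph k}

/-- The vertex `x(n)` of an infinite path `x`. -/
def vert (x : InfPath Λ) (n : Fin k → ℕ) : Λ.M := x.seg n n le_rfl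

/-- The shift `σ^p(x)`, given by `σ^p(x)(m, n) = x(m + p, n + p)`. -/
def shift (x : InfPath Λ) (p : Fin k → ℕ) : InfPath Λ where
  seg m n h := x.seg (m + p) (n + p) (add_le_add h le_rfl)
  d_seg m n h := by
    rw [x.d_seg]
    funext i
    simp only [Pi.sub_apply, Pi.add_apply]
    omega
  rng_seg m n h := x.rng_seg _ _ _
  src_seg m n h := x.src_seg _ _ _
  comp_seg m n p' h1 h2 := x.comp_seg _ _ _ _ _

/-- `x` is shift equivalent to `y` with lag `n ∈ ℤ^k`: there are `p, q ∈ ℕ^k` with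
`p - q = n` and `σ^p(x) = σ^q(y)`. -/
def ShiftEquivLag (x y : InfPath Λ) (n : Fin k → ℤ) : Prop :=
  ∃ p q : Fin k → ℕ, (fun i => (p i : ℤ) - (q i : ℤ)) = n ∧ x.shift p = y.shift q

/-- `x` is shift equivalent to `y`. -/
def ShiftEquiv (x y : InfPath Λ) : Prop := ∃ n : Fin k → ℤ, ShiftEquivLag x y n

/-- `x` is frequently divertable to `[y]`: for every `n ∈ ℕ^k` there is a path in
`x(n)Λ^∞` which is shift equivalent to `y`. -/
def FreqDiv (x y : InfPath Λ) : Prop :=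
  ∀ n : Fin k → ℕ, ∃ z : InfPath Λ, z.vert 0 = x.vert n ∧ ShiftEquiv z y

/-- The cylinder topology on `Λ^∞`, generated by the cylinder sets
`Z(α) = {x : x(0, d(α)) = α}` for morphisms `α` of `Λ`. -/
instance : TopologicalSpace (InfPath Λ) :=
  TopologicalSpace.generateFrom
    {S | ∃ a : Λ.M, S = {x : InfPath Λ | x.seg 0 (Λ.d a) zero_le = a}}

end InfPath

/-!
The cylinders `Z(x(0, n))` form a neighbourhood basis at `x`, and composing `x(0, n)` with
a path starting at `x(n)` shows that the closure of `[x]` is exactly the set of paths that are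
frequently divertable to `[x]`. A set `S` is locally closed iff every `z ∈ S` has a
neighbourhood `U` with `U ∩ closure S ⊆ S`; taking `U` a cylinder `Z(z(0, n))` and shifting
by `n` turns this into condition (2).
-/

namespace KGraph

variable {k : ℕ} {Λ : KGraph k} {a b c c' : Λ.M} {m n p : Fin k → ℕ}

lemma eq_and_eq_of_comp_eq_comp {a₁ a₂ b₁ b₂ : Λ.M} (h₁ : Λ.src a₁ = Λ.rng b₁)
    (h₂ : Λ.src a₂ = Λ.rng b₂) (h : Λ.comp a₁ b₁ = Λ.comp a₂ b₂) (hd : Λ.d a₁ = Λ.d a₂) :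
    a₁ = a₂ ∧ b₁ = b₂ := by
  have hdb : Λ.d b₁ = Λ.d b₂ := by
    have := Λ.d_comp _ _ h₁
    rwa [h, Λ.d_comp _ _ h₂, hd, add_right_inj, eq_comm] at this
  have := (Λ.factor _ _ _ (Λ.d_comp _ _ h₂)).unique (y₁ := (a₁, b₁)) (y₂ := (a₂, b₂))
    ⟨h₁, h, hd, hdb⟩ ⟨h₂, rfl, rfl, rfl⟩
  exact Prod.ext_iff.mp this

def IsPiece (a : Λ.M) (m n : Fin k → ℕ) (c : Λ.M) : Prop :=
  Λ.d c = n - m ∧ ∃ p s, Λ.src p = Λ.rng c ∧ Λ.src c = Λ.rng s ∧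
    Λ.comp (Λ.comp p c) s = a ∧ Λ.d p = m

lemma exists_isPiece (hmn : m ≤ n) (hn : n ≤ Λ.d a) : ∃ c, IsPiece a m n c := by
  obtain ⟨⟨a₁, s⟩, ⟨hs, rfl, ha₁, -⟩, -⟩ :=
    Λ.factor a n (Λ.d a - n) (add_tsub_cancel_of_le hn).symm
  obtain ⟨⟨p, c⟩, ⟨hc, rfl, hp, hcd⟩, -⟩ :=
    Λ.factor a₁ m (n - m) (ha₁.trans (add_tsub_cancel_of_le hmn).symm)
  exact ⟨c, hcd, p, s, hc, by rwa [Λ.src_comp _ _ hc] at hs, rfl, hp⟩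

lemma IsPiece.unique (hmn : m ≤ n) (hc : IsPiece a m n c) (hc' : IsPiece a m n c') :
    c = c' := by
  obtain ⟨hcd, p, s, hpc, hcs, rfl, hp⟩ := hc
  obtain ⟨hcd', p', s', hpc', hcs', ha, hp'⟩ := hc'
  have hd : ∀ {p c : Λ.M}, Λ.src p = Λ.rng c → Λ.d p = m → Λ.d c = n - m →
      Λ.d (Λ.comp p c) = n := fun h hp hc => by
    rw [Λ.d_comp _ _ h, hp, hc, add_tsub_cancel_of_le hmn]
  have hpc_eq := (eq_and_eq_of_comp_eq_comp (by rwa [Λ.src_comp _ _ hpc'])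
    (by rwa [Λ.src_comp _ _ hpc]) ha ((hd hpc' hp' hcd').trans (hd hpc hp hcd).symm)).1
  exact (eq_and_eq_of_comp_eq_comp hpc hpc' hpc_eq.symm (hp.trans hp'.symm)).2

lemma d_rng (a : Λ.M) : Λ.d (Λ.rng a) = 0 := by
  rw [← Λ.src_rng, Λ.d_src]

open Classical in
/-- The segment of `a` between degrees `m` and `n`; junk unless `m ≤ n ≤ d a`. -/
noncomputable def piece (a : Λ.M) (m n : Fin k → ℕ) : Λ.M :=
  if h : ∃ c, IsPiece a m n c then h.choose else a

lemma isPiece_piece (hmn : m ≤ n) (hn : n ≤ Λ.d a) : IsPiece a m n (piece a m n) := by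
  have h := exists_isPiece hmn hn
  rw [piece, dif_pos h]
  exact h.choose_spec

lemma eq_piece (hmn : m ≤ n) (hc : IsPiece a m n c) : c = piece a m n := by
  have h : ∃ c, IsPiece a m n c := ⟨c, hc⟩
  rw [piece, dif_pos h]
  exact hc.unique hmn h.choose_spec

lemma d_piece (hmn : m ≤ n) (hn : n ≤ Λ.d a) : Λ.d (piece a m n) = n - m :=
  (isPiece_piece hmn hn).1

lemma src_piece (hmn : m ≤ n) (hn : n ≤ Λ.d a) : Λ.src (piece a m n) = piece a n n := by
  obtain ⟨hcd, p, s, hpc, hcs, ha, hp⟩ := isPiece_piece hmn hn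
  refine eq_piece le_rfl
    ⟨by rw [Λ.d_src, tsub_self], Λ.comp p (piece a m n), s, ?_, ?_, ?_, ?_⟩
  · rw [Λ.src_comp _ _ hpc, Λ.rng_src]
  · rwa [Λ.src_src]
  · rwa [← Λ.src_comp _ _ hpc, Λ.comp_src_self]
  · rw [Λ.d_comp _ _ hpc, hp, hcd, add_tsub_cancel_of_le hmn]

lemma rng_piece (hmn : m ≤ n) (hn : n ≤ Λ.d a) : Λ.rng (piece a m n) = piece a m m := by
  obtain ⟨hcd, p, s, hpc, hcs, ha, hp⟩ := isPiece_piece hmn hn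
  refine eq_piece le_rfl
    ⟨by rw [d_rng, tsub_self], p, Λ.comp (piece a m n) s, ?_, ?_, ?_, hp⟩
  · rwa [Λ.rng_rng]
  · rw [Λ.src_rng, Λ.rng_comp _ _ hcs]
  · rwa [← hpc, Λ.comp_src_self, ← Λ.comp_assoc _ _ _ hpc hcs]

lemma piece_comp_piece (hmn : m ≤ n) (hnp : n ≤ p) (hp : p ≤ Λ.d a) :
    Λ.comp (piece a m n) (piece a n p) = piece a m p := by
  obtain ⟨hcd, q, s, hqc, hcs, ha, hq⟩ := isPiece_piece (hmn.trans hnp) hp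
  obtain ⟨⟨c₁, c₂⟩, ⟨h₁₂, hc, hc₁, hc₂⟩, -⟩ := Λ.factor (piece a m p) (n - m) (p - n)
    (by rw [hcd, add_comm, tsub_add_tsub_cancel hnp hmn])
  dsimp only at h₁₂ hc hc₁ hc₂
  rw [← hc, Λ.rng_comp _ _ h₁₂] at hqc
  rw [← hc, Λ.src_comp _ _ h₁₂] at hcs
  rw [← hc, ← Λ.comp_assoc _ _ _ hqc h₁₂] at ha
  have hqc₁ : Λ.src (Λ.comp q c₁) = Λ.rng c₂ := by rwa [Λ.src_comp _ _ hqc]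
  rw [← hc, ← eq_piece hmn ⟨hc₁, q, Λ.comp c₂ s, hqc, by rwa [Λ.rng_comp _ _ hcs], ?_, hq⟩,
    ← eq_piece hnp ⟨hc₂, Λ.comp q c₁, s, hqc₁, hcs, ha, ?_⟩]
  · rw [Λ.d_comp _ _ hqc, hq, hc₁, add_tsub_cancel_of_le hmn]
  · rwa [← Λ.comp_assoc _ _ _ hqc₁ hcs]

lemma piece_comp_of_le (hab : Λ.src a = Λ.rng b) (hmn : m ≤ n) (hn : n ≤ Λ.d a) :
    piece (Λ.comp a b) m n = piece a m n := by
  obtain ⟨hcd, p, s, hpc, hcs, ha, hp⟩ := isPiece_piece hmn hn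
  have hsb : Λ.src s = Λ.rng b := by
    rwa [← ha, Λ.src_comp _ _ (by rwa [Λ.src_comp _ _ hpc])] at hab
  refine (eq_piece hmn ⟨hcd, p, Λ.comp s b, hpc, by rwa [Λ.rng_comp _ _ hsb], ?_, hp⟩).symm
  rw [← Λ.comp_assoc _ _ _ (by rwa [Λ.src_comp _ _ hpc]) hsb, ha]

end KGraph

namespace InfPath

variable {k : ℕ} {Λ : KGraph k} {x y z w : InfPath Λ} {α : Λ.M} {m n p : Fin k → ℕ}

@[ext]
lemma ext (h : ∀ m n hmn, x.seg m n hmn = y.seg m n hmn) : x = y := by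
  cases x; cases y; congr; funext m n hmn; exact h m n hmn

lemma seg_eq_piece (x : InfPath Λ) (hmn : m ≤ n) {N : Fin k → ℕ} (hn : n ≤ N) :
    x.seg m n hmn = KGraph.piece (x.seg 0 N zero_le) m n := by
  refine KGraph.eq_piece hmn
    ⟨x.d_seg _ _ _, x.seg 0 m zero_le, x.seg n N hn, ?_, ?_, ?_, ?_⟩
  · rw [x.src_seg, x.rng_seg]
  · rw [x.src_seg, x.rng_seg]
  · rw [x.comp_seg, x.comp_seg]
  · rw [x.d_seg, tsub_zero]

lemma vert_shift (x : InfPath Λ) (p n : Fin k → ℕ) : (x.shift p).vert n = x.vert (n + p) :=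
  rfl

lemma shift_shift (x : InfPath Λ) (p q : Fin k → ℕ) :
    (x.shift p).shift q = x.shift (p + q) := by
  ext m n hmn
  simp only [shift]
  congr 1 <;> abel

lemma shiftEquiv_iff : ShiftEquiv x y ↔ ∃ p q, x.shift p = y.shift q :=
  ⟨fun ⟨_, p, q, _, h⟩ => ⟨p, q, h⟩, fun ⟨p, q, h⟩ => ⟨_, p, q, rfl, h⟩⟩

lemma ShiftEquiv.refl (x : InfPath Λ) : ShiftEquiv x x :=
  shiftEquiv_iff.2 ⟨0, 0, rfl⟩

lemma ShiftEquiv.symm (h : ShiftEquiv x y) : ShiftEquiv y x :=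
  let ⟨p, q, h⟩ := shiftEquiv_iff.1 h
  shiftEquiv_iff.2 ⟨q, p, h.symm⟩

lemma ShiftEquiv.trans (hxy : ShiftEquiv x y) (hyz : ShiftEquiv y z) : ShiftEquiv x z := by
  obtain ⟨p, q, hpq⟩ := shiftEquiv_iff.1 hxy
  obtain ⟨p', q', hpq'⟩ := shiftEquiv_iff.1 hyz
  refine shiftEquiv_iff.2 ⟨p + p', q' + q, ?_⟩
  rw [← shift_shift, hpq, shift_shift, add_comm, ← shift_shift, hpq', shift_shift]

lemma shiftEquiv_shift (x : InfPath Λ) (p : Fin k → ℕ) : ShiftEquiv x (x.shift p) :=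
  shiftEquiv_iff.2 ⟨p, 0, by rw [shift_shift, add_zero]⟩

def prependInit (α : Λ.M) (y : InfPath Λ) (n : Fin k → ℕ) : Λ.M :=
  Λ.comp α (y.seg 0 n zero_le)

lemma src_eq_rng_seg_zero (h : Λ.src α = y.vert 0) (n : Fin k → ℕ) :
    Λ.src α = Λ.rng (y.seg 0 n zero_le) := by
  rw [y.rng_seg]; exact h

lemma d_prependInit (h : Λ.src α = y.vert 0) (n : Fin k → ℕ) :
    Λ.d (prependInit α y n) = Λ.d α + n := by
  rw [prependInit, Λ.d_comp _ _ (src_eq_rng_seg_zero h n), y.d_seg, tsub_zero]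

lemma le_d_prependInit (h : Λ.src α = y.vert 0) (n : Fin k → ℕ) :
    n ≤ Λ.d (prependInit α y n) := by
  rw [d_prependInit h]; exact le_add_self

lemma src_prependInit_eq_rng_seg (h : Λ.src α = y.vert 0) (hmn : m ≤ n) :
    Λ.src (prependInit α y m) = Λ.rng (y.seg m n hmn) := by
  rw [prependInit, Λ.src_comp _ _ (src_eq_rng_seg_zero h m), y.src_seg, y.rng_seg]

lemma prependInit_comp_seg (h : Λ.src α = y.vert 0) (hmn : m ≤ n) :
    Λ.comp (prependInit α y m) (y.seg m n hmn) = prependInit α y n := by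
  rw [prependInit, Λ.comp_assoc _ _ _ (src_eq_rng_seg_zero h m) (by rw [y.src_seg, y.rng_seg]),
    y.comp_seg, prependInit]

lemma piece_prependInit_of_le (h : Λ.src α = y.vert 0) (hmn : m ≤ n) (hnp : n ≤ p) :
    KGraph.piece (prependInit α y p) m n = KGraph.piece (prependInit α y n) m n := by
  rw [← prependInit_comp_seg h hnp,
    KGraph.piece_comp_of_le (src_prependInit_eq_rng_seg h hnp) hmn (le_d_prependInit h n)]

/-- The infinite path `α y`: its segment `(m, n)` is cut out of the morphism `α y(0, n)`. -/
noncomputable def prepend (α : Λ.M) (y : InfPath Λ) (h : Λ.src α = y.vert 0) :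
    InfPath Λ where
  seg m n _ := KGraph.piece (prependInit α y n) m n
  d_seg _ _ hmn := KGraph.d_piece hmn (le_d_prependInit h _)
  rng_seg m _ hmn := by
    rw [KGraph.rng_piece hmn (le_d_prependInit h _), piece_prependInit_of_le h le_rfl hmn]
  src_seg _ _ hmn := KGraph.src_piece hmn (le_d_prependInit h _)
  comp_seg _ _ _ h₁ h₂ := by
    rw [← piece_prependInit_of_le h h₁ h₂,
      KGraph.piece_comp_piece h₁ h₂ (le_d_prependInit h _)]

lemma seg_prepend_zero (h : Λ.src α = y.vert 0) (hn : Λ.d α = n) :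
    (prepend α y h).seg 0 n zero_le = α := by
  subst hn
  refine (KGraph.eq_piece zero_le ⟨(tsub_zero _).symm, Λ.rng α, y.seg 0 (Λ.d α) zero_le,
    Λ.src_rng α, src_eq_rng_seg_zero h _, ?_, KGraph.d_rng α⟩).symm
  rw [Λ.rng_comp_self]; rfl

lemma vert_zero_prepend (h : Λ.src α = y.vert 0) : (prepend α y h).vert 0 = Λ.rng α := by
  rw [vert, ← (prepend α y h).rng_seg 0 (Λ.d α) zero_le, seg_prepend_zero h rfl]

lemma shift_prepend (h : Λ.src α = y.vert 0) (hn : Λ.d α = n) :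
    (prepend α y h).shift n = y := by
  subst hn
  ext m n hmn
  show KGraph.piece _ (m + Λ.d α) (n + Λ.d α) = _
  refine (KGraph.eq_piece (add_le_add hmn le_rfl) ⟨?_, prependInit α y m,
    y.seg n (n + Λ.d α) le_self_add, src_prependInit_eq_rng_seg h hmn, ?_, ?_, ?_⟩).symm
  · rw [y.d_seg, add_tsub_add_eq_tsub_right]
  · rw [y.src_seg, y.rng_seg]
  · rw [prependInit_comp_seg h hmn, prependInit_comp_seg h le_self_add]
  · rw [d_prependInit h, add_comm]

lemma prepend_shiftEquiv (h : Λ.src α = y.vert 0) : ShiftEquiv (prepend α y h) y := by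
  simpa only [shift_prepend h rfl] using shiftEquiv_shift (prepend α y h) (Λ.d α)

/-- The cylinder set `Z(x(0, n))`. -/
def cylinder (x : InfPath Λ) (n : Fin k → ℕ) : Set (InfPath Λ) :=
  {w | w.seg 0 n zero_le = x.seg 0 n zero_le}

lemma isOpen_cylinder (x : InfPath Λ) (n : Fin k → ℕ) : IsOpen (cylinder x n) := by
  obtain ⟨a, ha, rfl⟩ : ∃ a, x.seg 0 n zero_le = a ∧ Λ.d a = n :=
    ⟨_, rfl, by rw [x.d_seg, tsub_zero]⟩
  rw [cylinder, ha]
  exact .basic _ ⟨a, rfl⟩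

lemma cylinder_anti (x : InfPath Λ) (hmn : m ≤ n) : cylinder x n ⊆ cylinder x m := by
  intro w hw
  change w.seg 0 m zero_le = x.seg 0 m zero_le
  rw [w.seg_eq_piece zero_le hmn, hw, ← x.seg_eq_piece zero_le hmn]

lemma vert_eq_of_mem_cylinder (hw : w ∈ cylinder x n) : w.vert n = x.vert n := by
  rw [vert, ← w.src_seg 0 n zero_le, hw, x.src_seg]
  rfl

lemma exists_cylinder_subset {U : Set (InfPath Λ)} (hU : IsOpen U) (hx : x ∈ U) :
    ∃ n, cylinder x n ⊆ U := by
  induction hU generalizing x with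
  | basic S hS =>
    obtain ⟨a, rfl⟩ := hS
    exact ⟨Λ.d a, fun w hw => hw.trans hx⟩
  | univ => exact ⟨0, Set.subset_univ _⟩
  | inter S T _ _ ihS ihT =>
    obtain ⟨m, hm⟩ := ihS hx.1
    obtain ⟨n, hn⟩ := ihT hx.2
    exact ⟨m ⊔ n, Set.subset_inter ((cylinder_anti x le_sup_left).trans hm)
      ((cylinder_anti x le_sup_right).trans hn)⟩
  | sUnion S _ ih =>
    obtain ⟨T, hT, hxT⟩ := hx
    obtain ⟨n, hn⟩ := ih T hT hxT
    exact ⟨n, hn.trans (Set.subset_sUnion_of_mem hT)⟩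

lemma nhds_basis_cylinder (x : InfPath Λ) :
    (nhds x).HasBasis (fun _ => True) (cylinder x) := by
  refine ⟨fun U => ⟨fun hU => ?_, fun ⟨n, _, hn⟩ => Filter.mem_of_superset
    ((isOpen_cylinder x n).mem_nhds rfl) hn⟩⟩
  obtain ⟨V, hVU, hV, hxV⟩ := mem_nhds_iff.1 hU
  obtain ⟨n, hn⟩ := exists_cylinder_subset hV hxV
  exact ⟨n, trivial, hn.trans hVU⟩

lemma src_seg_zero_of_vert_eq (hy : y.vert 0 = x.vert n) :
    Λ.src (x.seg 0 n zero_le) = y.vert 0 := by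
  rw [x.src_seg, hy]; rfl

lemma prepend_mem_cylinder (h : Λ.src (x.seg 0 n zero_le) = y.vert 0) :
    prepend (x.seg 0 n zero_le) y h ∈ cylinder x n :=
  seg_prepend_zero h (by rw [x.d_seg, tsub_zero])

lemma FreqDiv.shift (h : FreqDiv w x) (p : Fin k → ℕ) : FreqDiv (w.shift p) x :=
  fun n => h (n + p)

lemma FreqDiv.trans_shiftEquiv (h : FreqDiv w x) (hxz : ShiftEquiv x z) : FreqDiv w z :=
  fun n => let ⟨u, hu, hux⟩ := h n; ⟨u, hu, hux.trans hxz⟩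

lemma FreqDiv.prepend (hy : FreqDiv y x) (h : Λ.src α = y.vert 0) :
    FreqDiv (prepend α y h) x := by
  intro m
  set w := InfPath.prepend α y h
  have hmN : m ≤ m ⊔ Λ.d α := le_sup_left
  -- divert from `w(m ⊔ d α) = y(m ⊔ d α - d α)`, reached from `w(m)` along `w(m, m ⊔ d α)`
  obtain ⟨u, hu, hux⟩ := hy (m ⊔ Λ.d α - Λ.d α)
  have hsrc : Λ.src (w.seg m _ hmN) = u.vert 0 := by
    rw [w.src_seg, hu, ← shift_prepend h rfl, vert_shift, tsub_add_cancel_of_le le_sup_right]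
    rfl
  exact ⟨InfPath.prepend _ u hsrc, by rw [vert_zero_prepend, w.rng_seg]; rfl,
    (prepend_shiftEquiv hsrc).trans hux⟩

lemma mem_closure_setOf_shiftEquiv_iff :
    z ∈ closure {w | ShiftEquiv w x} ↔ FreqDiv z x := by
  rw [mem_closure_iff_nhds_basis (nhds_basis_cylinder z)]
  refine ⟨fun h n => ?_, fun h n _ => ?_⟩
  · obtain ⟨w, hwx, hwz⟩ := h n trivial
    refine ⟨w.shift n, ?_, (shiftEquiv_shift w n).symm.trans hwx⟩
    rw [vert_shift, zero_add, vert_eq_of_mem_cylinder hwz]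
  · obtain ⟨u, hu, hux⟩ := h n
    have hsrc := src_seg_zero_of_vert_eq hu
    exact ⟨prepend _ u hsrc, (prepend_shiftEquiv hsrc).trans hux, prepend_mem_cylinder hsrc⟩

lemma exists_forall_shiftEquiv_of_isLocallyClosed (hx : IsLocallyClosed {z | ShiftEquiv z x}) :
    ∃ n, ∀ y : InfPath Λ, y.vert 0 = x.vert n → FreqDiv y x → ShiftEquiv y x := by
  have hx' := ((isLocallyClosed_tfae {z | ShiftEquiv z x}).out 0 3).1 hx
  obtain ⟨U, hxU, hU, hUx⟩ := hx' x (ShiftEquiv.refl x)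
  obtain ⟨n, hn⟩ := exists_cylinder_subset hU hxU
  refine ⟨n, fun y hy hyx => ?_⟩
  have hsrc := src_seg_zero_of_vert_eq hy
  have hw : ShiftEquiv (prepend _ y hsrc) x := hUx ⟨hn (prepend_mem_cylinder hsrc),
    mem_closure_setOf_shiftEquiv_iff.2 (hyx.prepend hsrc)⟩
  exact (prepend_shiftEquiv hsrc).symm.trans hw

lemma isLocallyClosed_setOf_shiftEquiv
    (h : ∀ z, ShiftEquiv z x →
      ∃ n, ∀ y : InfPath Λ, y.vert 0 = z.vert n → FreqDiv y z → ShiftEquiv y z) :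
    IsLocallyClosed {z | ShiftEquiv z x} := by
  refine ((isLocallyClosed_tfae {z | ShiftEquiv z x}).out 0 3).2 fun z hzx => ?_
  obtain ⟨n, hn⟩ := h z hzx
  refine ⟨cylinder z n, rfl, isOpen_cylinder z n, fun w ⟨hwz, hwx⟩ => ?_⟩
  have hy : (w.shift n).vert 0 = z.vert n := by
    rw [vert_shift, zero_add, vert_eq_of_mem_cylinder hwz]
  have hyz : ShiftEquiv (w.shift n) z :=
    hn _ hy (((mem_closure_setOf_shiftEquiv_iff.1 hwx).shift n).trans_shiftEquiv hzx.symm)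
  exact ((shiftEquiv_shift w n).trans hyz).trans hzx

end InfPath

theorem stmt9_general {k : ℕ} (Λ : KGraph k) :
    (∀ x : InfPath Λ, IsLocallyClosed {z : InfPath Λ | InfPath.ShiftEquiv z x}) ↔
    (∀ x : InfPath Λ, ∃ n : Fin k → ℕ, ∀ y : InfPath Λ, y.vert 0 = x.vert n →
      InfPath.FreqDiv y x → InfPath.ShiftEquiv y x) :=
  ⟨fun h x => InfPath.exists_forall_shiftEquiv_of_isLocallyClosed (h x),
    fun h _ => InfPath.isLocallyClosed_setOf_shiftEquiv fun z _ => h z⟩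

/-- For a row-finite `k`-graph `Λ` without sources, the following are equivalent:
(1) every shift-equivalence class `[x]` is locally closed in `Λ^∞` (cylinder topology);
(2) for every `x ∈ Λ^∞` there is `n ∈ ℕ^k` such that every path in `x(n)Λ^∞` that is
frequently divertable to `[x]` is shift equivalent to `x`. -/
theorem stmt9 {k : ℕ} (hk : 1 ≤ k) (Λ : KGraph k) (hrf : Λ.RowFinite)
    (hns : Λ.NoSources) :
    (∀ x : InfPath Λ, IsLocallyClosed {z : InfPath Λ | InfPath.ShiftEquiv z x}) ↔
    (∀ x : InfPath Λ, ∃ n : Fin k → ℕ, ∀ y : InfPath Λ, y.vert 0 = x.vert n →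
      InfPath.FreqDiv y x → InfPath.ShiftEquiv y x) :=
  stmt9_general Λ
end

section
/- Let E be a directed graph and let x ∈ E^∞ be a path that does not contain a cycle and such that for every n ∈ ℕ the set x(n)E^∞ ∩ [x] has at least two elements. Then for every m ∈ ℕ there is a path in x(m)E^∞ that is frequently divertable to [x] but not shift equivalent to x. -/
/-- A directed graph: countable sets of vertices and edges, with range and source
maps. -/
structure DGraph : Type 1 where
  V : Type
  E : Type
  countableV : Countable V
  countableE : Countable E
  r : E → V
  s : E → V

namespace DGraph

/-- `E` is row-finite: every vertex receives only finitely many edges. -/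
def RowFinite (G : DGraph) : Prop := ∀ v : G.V, {e : G.E | G.r e = v}.Finite

/-- A source of `E`: a vertex receiving no edges. -/
def IsSource (G : DGraph) (v : G.V) : Prop := ∀ e : G.E, G.r e ≠ v

end DGraph

/-- A (finite or infinite) path in the directed graph `G`.  `edge i` is the
`(i+1)`-st edge of the path (or `none` beyond the end of the path); once `none`
always `none`, so a path is either a vertex (`rng`, with no edges), a finite path,
or an infinite path.  Edges are composed so that `s(edge i) = r(edge (i+1))`. -/
structure LPath (G : DGraph) where
  rng : G.V
  edge : ℕ → Option G.E
  edge_closed : ∀ i, edge i = none → edge (i + 1) = none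
  rng_compat : ∀ e, edge 0 = some e → G.r e = rng
  compat : ∀ i e f, edge i = some e → edge (i + 1) = some f → G.s e = G.r f

namespace LPath

variable {G : DGraph}

/-- The vertex `x(n)` of the path `x` (a junk value, the range, beyond the length
of the path). -/
def vert (x : LPath G) : ℕ → G.V
  | 0 => x.rng
  | n + 1 =>
    match x.edge n with
    | some e => G.s e
    | none => x.rng

/-- `x` is an infinite path, i.e. a member of `E^∞`. -/
def Infinite (x : LPath G) : Prop := ∀ i, (x.edge i).isSome

/-- `n ≤ |x|`: the first `n` edges of `x` all exist. -/
def LeLen (x : LPath G) (n : ℕ) : Prop := ∀ i, i < n → (x.edge i).isSome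

/-- `|x| = n`: `x` is a finite path of length `n`. -/
def LenEq (x : LPath G) (n : ℕ) : Prop := x.edge n = none ∧ x.LeLen n

theorem vert_eq (x : LPath G) (m : ℕ) (e : G.E) (h : x.edge m = some e) :
    G.r e = x.vert m := by
  cases m with
  | zero => exact x.rng_compat e h
  | succ n =>
    cases hn : x.edge n with
    | none => exact absurd h (by simp [x.edge_closed n hn])
    | some f =>
      have hc := x.compat n f e hn h
      simp only [vert, hn]
      exact hc.symm

/-- The shifted path `σ^m(x)` (meaningful when `m ≤ |x|`). -/
def shift (x : LPath G) (m : ℕ) : LPath G where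
  rng := x.vert m
  edge i := x.edge (m + i)
  edge_closed i h := x.edge_closed (m + i) h
  rng_compat e he := x.vert_eq m e he
  compat i e f he hf := x.compat (m + i) e f he hf

/-- `x` is shift equivalent to `y` with lag `n ∈ ℤ`: there are `p, q ∈ ℕ` with
`p - q = n`, `p ≤ |x|`, `q ≤ |y|` and `σ^p(x) = σ^q(y)`. -/
def ShiftEquivLag (x y : LPath G) (n : ℤ) : Prop :=
  ∃ p q : ℕ, (p : ℤ) - (q : ℤ) = n ∧ x.LeLen p ∧ y.LeLen q ∧ x.shift p = y.shift q

/-- `x` is shift equivalent to `y`. -/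
def ShiftEquiv (x y : LPath G) : Prop := ∃ n : ℤ, ShiftEquivLag x y n

/-- `x` belongs to `E^{≤∞}`: it is infinite, or finite with its source a source
of the graph. -/
def Boundary (x : LPath G) : Prop :=
  x.Infinite ∨ ∃ n : ℕ, x.LenEq n ∧ G.IsSource (x.vert n)

/-- `x` is frequently divertable to `[y]`: for every `n ≤ |x|` there is a path in
`x(n)E^{≤∞}` that is shift equivalent to `y`. -/
def FreqDiv (x y : LPath G) : Prop :=
  ∀ n : ℕ, x.LeLen n → ∃ z : LPath G, z.Boundary ∧ z.rng = x.vert n ∧ ShiftEquiv z y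

/-- The segment `x(m, n)` of `x` is a cycle: it is closed (`x(m) = x(n)`) and the
sources `x(i)`, `m < i ≤ n`, of its edges are pairwise distinct. -/
def HasCycleAt (x : LPath G) (m n : ℕ) : Prop :=
  m < n ∧ x.LeLen n ∧ x.vert m = x.vert n ∧
    ∀ i j, m < i → i ≤ n → m < j → j ≤ n → x.vert i = x.vert j → i = j

/-- `x` contains a cycle. -/
def ContainsCycle (x : LPath G) : Prop := ∃ m n, x.HasCycleAt m n

end LPath

/-- A cycle in `G`: a finite path `α = α_1 ⋯ α_len` (here 0-indexed, and with junk
values of `edge` beyond `len`) of non-zero length with `r(α) = s(α)` and whose edges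
have pairwise distinct sources. -/
structure DCycle (G : DGraph) where
  len : ℕ
  len_pos : 0 < len
  edge : ℕ → G.E
  compat : ∀ i, i + 1 < len → G.s (edge i) = G.r (edge (i + 1))
  closed : G.s (edge (len - 1)) = G.r (edge 0)
  distinct : ∀ i j, i < len → j < len → G.s (edge i) = G.s (edge j) → i = j

namespace DCycle

variable {G : DGraph}

/-- `f` is an entry to the cycle `c`: `r(f) = r(c_i)` and `f ≠ c_i` for some `i`. -/
def IsEntry (c : DCycle G) (f : G.E) : Prop :=
  ∃ i, i < c.len ∧ G.r f = G.r (c.edge i) ∧ f ≠ c.edge i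

/-- The edge `f` lies in the cycle `c`. -/
def EdgeMem (c : DCycle G) (f : G.E) : Prop := ∃ i, i < c.len ∧ c.edge i = f

end DCycle



namespace LPath

variable {G : DGraph}

theorem ext' {x y : LPath G} (h1 : x.rng = y.rng) (h2 : x.edge = y.edge) : x = y := by
  cases x; cases y; cases h1; cases h2; rfl

theorem vert_succ (x : LPath G) {n : ℕ} {e : G.E} (he : x.edge n = some e) :
    x.vert (n + 1) = G.s e := by simp [vert, he]

theorem shift_vert (x : LPath G) (hx : x.Infinite) (a b : ℕ) :
    (x.shift a).vert b = x.vert (a + b) := by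
  cases b with
  | zero => rfl
  | succ b =>
    obtain ⟨e, he⟩ := Option.isSome_iff_exists.mp (hx (a + b))
    have h1 : (x.shift a).edge b = some e := he
    rw [vert_succ _ h1, ← Nat.add_assoc, vert_succ _ he]

theorem shift_infinite (x : LPath G) (hx : x.Infinite) (a : ℕ) : (x.shift a).Infinite :=
  fun i => hx (a + i)

theorem shift_shift (x : LPath G) (hx : x.Infinite) (a b : ℕ) :
    (x.shift a).shift b = x.shift (a + b) :=
  ext' (shift_vert x hx a b) (funext fun i => by simp [shift, Nat.add_assoc])

theorem shiftEquiv_of_shift_eq {y x : LPath G} (hy : y.Infinite) (hx : x.Infinite)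
    (p q : ℕ) (h : y.shift p = x.shift q) : ShiftEquiv y x :=
  ⟨(p : ℤ) - q, p, q, rfl, fun i _ => hy i, fun i _ => hx i, h⟩

theorem vert_inj (x : LPath G) (hx : x.Infinite) (hnc : ¬ x.ContainsCycle) :
    Function.Injective x.vert := by
  classical
  intro a b hab
  by_contra hne
  apply hnc
  have hEx : ∃ k, ∃ m, x.vert m = x.vert (m + k + 1) := by
    rcases Nat.lt_or_ge a b with h | h
    · exact ⟨b - a - 1, a, by rw [show a + (b - a - 1) + 1 = b by omega]; exact hab⟩
    · have hba : b < a := lt_of_le_of_ne h (Ne.symm hne)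
      exact ⟨a - b - 1, b, by rw [show b + (a - b - 1) + 1 = a by omega]; exact hab.symm⟩
  obtain ⟨m0, hm0⟩ := Nat.find_spec hEx
  refine ⟨m0, m0 + Nat.find hEx + 1, by omega, fun i _ => hx i, hm0, ?_⟩
  intro i j hi1 hi2 hj1 hj2 hij
  by_contra hne'
  rcases Nat.lt_or_ge i j with hlt | hge
  · exact Nat.find_min hEx (show j - i - 1 < Nat.find hEx by omega)
      ⟨i, by rw [show i + (j - i - 1) + 1 = j by omega]; exact hij⟩
  · have hlt : j < i := lt_of_le_of_ne hge fun h => hne' h.symm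
    exact Nat.find_min hEx (show i - j - 1 < Nat.find hEx by omega)
      ⟨j, by rw [show j + (i - j - 1) + 1 = i by omega]; exact hij.symm⟩

/-- Partial sums of a sequence of segment lengths. -/
def psum (L : ℕ → ℕ) : ℕ → ℕ
  | 0 => 0
  | i + 1 => psum L i + L i

theorem psum_strictMono (L : ℕ → ℕ) (hL : ∀ i, 0 < L i) : StrictMono (psum L) :=
  strictMono_nat_of_lt_succ fun n =>
    show psum L n < psum L n + L n from Nat.lt_add_of_pos_right (hL n)

theorem psum_le (L : ℕ → ℕ) (hL : ∀ i, 0 < L i) : ∀ i, i ≤ psum L i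
  | 0 => Nat.le_refl 0
  | i + 1 => by
      have h1 := psum_le L hL i
      have h2 := hL i
      show i + 1 ≤ psum L i + L i
      omega

theorem psum_exists (L : ℕ → ℕ) (hL : ∀ i, 0 < L i) (k : ℕ) :
    ∃ i, psum L i ≤ k ∧ k < psum L (i + 1) := by
  induction k with
  | zero =>
    refine ⟨0, Nat.le_refl 0, ?_⟩
    show 0 < psum L 0 + L 0
    have := hL 0
    omega
  | succ k ih =>
    obtain ⟨i, h1, h2⟩ := ih
    rcases eq_or_lt_of_le (Nat.succ_le_of_lt h2) with hb | hs
    · refine ⟨i + 1, le_of_eq hb.symm, ?_⟩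
      show k + 1 < psum L (i + 1) + L (i + 1)
      have := hL (i + 1)
      omega
    · exact ⟨i, by omega, hs⟩

/-- Concatenation of an infinite sequence of compatible infinite paths: the
resulting path follows the first `L i` edges of `W i` during the `i`-th segment. -/
theorem concat (W : ℕ → LPath G) (L : ℕ → ℕ)
    (hinf : ∀ i, (W i).Infinite) (hL : ∀ i, 0 < L i)
    (hcomp : ∀ i, (W i).vert (L i) = (W (i + 1)).rng) :
    ∃ y : LPath G, y.Infinite ∧ y.rng = (W 0).rng ∧
      ∀ i k, psum L i ≤ k → k < psum L (i + 1) →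
        y.edge k = (W i).edge (k - psum L i) ∧
        y.vert k = (W i).vert (k - psum L i) := by
  classical
  set P := psum L with hPdef
  set seg : ℕ → ℕ := fun k => Nat.findGreatest (fun i => P i ≤ k) k with hsegdef
  have hPmono : StrictMono P := psum_strictMono L hL
  have hPle : ∀ i, i ≤ P i := psum_le L hL
  have hP0 : P 0 = 0 := rfl
  have hPsucc : ∀ i, P (i + 1) = P i + L i := fun _ => rfl
  have hs1 : ∀ k, P (seg k) ≤ k := fun k =>
    Nat.findGreatest_spec (P := fun i => P i ≤ k) (Nat.zero_le k)
      (le_of_eq_of_le hP0 (Nat.zero_le k))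
  have hs2 : ∀ k, k < P (seg k + 1) := by
    intro k
    by_contra h
    push_neg at h
    have h1 : seg k + 1 ≤ seg k :=
      Nat.le_findGreatest (P := fun i => P i ≤ k) (le_trans (hPle (seg k + 1)) h) h
    omega
  have hsu : ∀ i k, P i ≤ k → k < P (i + 1) → seg k = i := by
    intro i k h1 h2
    have hge : i ≤ seg k :=
      Nat.le_findGreatest (P := fun j => P j ≤ k) (le_trans (hPle i) h1) h1
    have hle : seg k ≤ i := by
      by_contra h
      push_neg at h
      have h3 := hPmono.monotone (show i + 1 ≤ seg k from h)
      have h4 := hs1 k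
      omega
    omega
  have hseg0 : seg 0 = 0 := by
    refine hsu 0 0 (le_of_eq hP0) ?_
    rw [hPsucc, hP0]
    have := hL 0
    omega
  -- successor segment dichotomy
  have hsucc : ∀ k, (seg (k + 1) = seg k ∧ k + 1 - P (seg k) = (k - P (seg k)) + 1)
      ∨ (seg (k + 1) = seg k + 1 ∧ k + 1 = P (seg k + 1)) := by
    intro k
    have hik := hs1 k
    have hik2 := hs2 k
    rcases eq_or_lt_of_le (Nat.succ_le_of_lt hik2) with hb | hs
    · refine Or.inr ⟨?_, hb⟩
      exact hsu _ _ (le_of_eq hb.symm) (lt_of_le_of_lt hb.le (hPmono (Nat.lt_succ_self (seg k + 1))))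
    · exact Or.inl ⟨hsu _ _ (le_trans hik (Nat.le_succ k)) hs, by omega⟩
  have hclosed : ∀ i, (W (seg i)).edge (i - P (seg i)) = none →
      (W (seg (i + 1))).edge (i + 1 - P (seg (i + 1))) = none := by
    intro i h
    exact absurd h (Option.isSome_iff_ne_none.mp (hinf _ _))
  have hrngc : ∀ e, (W (seg 0)).edge (0 - P (seg 0)) = some e → G.r e = (W 0).rng := by
    intro e he
    rw [hseg0] at he
    exact (W 0).rng_compat e he
  have hcompat : ∀ k e f, (W (seg k)).edge (k - P (seg k)) = some e →
      (W (seg (k + 1))).edge (k + 1 - P (seg (k + 1))) = some f → G.s e = G.r f := by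
    intro k e f he hf
    rcases hsucc k with ⟨hA, hB⟩ | ⟨hA, hB⟩
    · rw [hA, hB] at hf
      exact (W (seg k)).compat _ e f he hf
    · rw [hA] at hf
      rw [show k + 1 - P (seg k + 1) = 0 by omega] at hf
      have hrf : G.r f = (W (seg k + 1)).rng := (W _).rng_compat f hf
      have hLk := hL (seg k)
      have hPs := hPsucc (seg k)
      rw [show k - P (seg k) = L (seg k) - 1 by omega] at he
      have hse : G.s e = (W (seg k)).vert (L (seg k)) := by
        rw [show L (seg k) = (L (seg k) - 1) + 1 by omega, vert_succ _ he]
      rw [hse, hcomp, hrf]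
  set y : LPath G := ⟨(W 0).rng, fun k => (W (seg k)).edge (k - P (seg k)),
    hclosed, hrngc, hcompat⟩ with hydef
  have hyedge : ∀ k, y.edge k = (W (seg k)).edge (k - P (seg k)) := fun _ => rfl
  have hyvert : ∀ k, y.vert k = (W (seg k)).vert (k - P (seg k)) := by
    intro k
    cases k with
    | zero =>
      rw [hseg0]
      rfl
    | succ k =>
      obtain ⟨e, he⟩ := Option.isSome_iff_exists.mp (hinf (seg k) (k - P (seg k)))
      have hye : y.edge k = some e := he
      rw [vert_succ y hye]
      rcases hsucc k with ⟨hA, hB⟩ | ⟨hA, hB⟩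
      · rw [hA, hB, vert_succ _ he]
      · rw [hA]
        rw [show k + 1 - P (seg k + 1) = 0 by omega]
        have hLk := hL (seg k)
        have hPs := hPsucc (seg k)
        have hkk : k - P (seg k) = L (seg k) - 1 := by
          have := hs1 k
          omega
        rw [hkk] at he
        have hse : G.s e = (W (seg k)).vert (L (seg k)) := by
          rw [show L (seg k) = (L (seg k) - 1) + 1 by omega, vert_succ _ he]
        rw [hse, hcomp]
        rfl
  refine ⟨y, fun k => hinf _ _, rfl, ?_⟩
  intro i k h1 h2
  have hk : seg k = i := hsu i k h1 h2
  rw [hyedge, hyvert, hk]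
  exact ⟨rfl, rfl⟩

end LPath

/-- Let `E` be a directed graph and let `x ∈ E^∞` contain no cycle and be such that
each set `x(n)E^∞ ∩ [x]` has at least two elements.  Then for every `m ∈ ℕ` there is a
path in `x(m)E^∞` that is frequently divertable to `[x]` but not shift equivalent
to `x`. -/
theorem stmt12 (G : DGraph) (x : LPath G) (hx : x.Infinite)
    (hnc : ¬ x.ContainsCycle)
    (h2 : ∀ n : ℕ, ∃ z w : LPath G, z ≠ w ∧ z.Infinite ∧ w.Infinite ∧
      z.rng = x.vert n ∧ w.rng = x.vert n ∧
      LPath.ShiftEquiv z x ∧ LPath.ShiftEquiv w x) :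
    ∀ m : ℕ, ∃ y : LPath G, y.Infinite ∧ y.rng = x.vert m ∧
      LPath.FreqDiv y x ∧ ¬ LPath.ShiftEquiv y x := by
  classical
  have hxinj : Function.Injective x.vert := LPath.vert_inj x hx hnc
  have key : ∀ n : ℕ, ∃ z : LPath G, ∃ d p q : ℕ, z.Infinite ∧ z.rng = x.vert n ∧
      z.edge d ≠ x.edge (n + d) ∧ d < p ∧ z.shift p = x.shift q := by
    intro n
    obtain ⟨z, w, hzw, hzi, hwi, hzr, hwr, hzx, hwx⟩ := h2 n
    have main : ∀ u : LPath G, u.Infinite → u.rng = x.vert n → u ≠ x.shift n →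
        LPath.ShiftEquiv u x → ∃ z : LPath G, ∃ d p q : ℕ, z.Infinite ∧
          z.rng = x.vert n ∧ z.edge d ≠ x.edge (n + d) ∧ d < p ∧
          z.shift p = x.shift q := by
      rintro u hui hur hune ⟨_, p', q', -, -, -, hsh⟩
      have hd : ∃ d, u.edge d ≠ x.edge (n + d) := by
        by_contra h
        push_neg at h
        exact hune (LPath.ext' hur (funext fun i => h i))
      obtain ⟨d, hd⟩ := hd
      refine ⟨u, d, p' + (d + 1), q' + (d + 1), hui, hur, hd, by omega, ?_⟩
      rw [← LPath.shift_shift u hui, hsh, LPath.shift_shift x hx]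
    by_cases hz : z = x.shift n
    · exact main w hwi hwr (fun h => hzw (hz.trans h.symm)) hwx
    · exact main z hzi hzr hz hzx
  choose Z D Pn Q hZinf hZrng hZdev hZdp hZsh using key
  intro m
  -- the sequence of starting vertices of the segments
  set nseq : ℕ → ℕ := fun i => Nat.rec m (fun _ ni => Q ni) i with hnseq
  set W : ℕ → LPath G := fun i => Z (nseq i) with hW
  set L : ℕ → ℕ := fun i => Pn (nseq i) with hLdef
  have hWinf : ∀ i, (W i).Infinite := fun i => hZinf (nseq i)
  have hL : ∀ i, 0 < L i := fun i => lt_of_le_of_lt (Nat.zero_le _) (hZdp (nseq i))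
  have hWrng : ∀ i, (W i).rng = x.vert (nseq i) := fun i => hZrng (nseq i)
  have hcomp : ∀ i, (W i).vert (L i) = (W (i + 1)).rng := by
    intro i
    have h1 : ((W i).shift (L i)).rng = (x.shift (Q (nseq i))).rng :=
      congrArg LPath.rng (hZsh (nseq i))
    have h2 : (W i).vert (L i) = x.vert (Q (nseq i)) := h1
    rw [h2, hWrng (i + 1)]
  obtain ⟨y, hyinf, hyrng, hyspec⟩ := LPath.concat W L hWinf hL hcomp
  refine ⟨y, hyinf, by rw [hyrng, hWrng 0]; rfl, ?_, ?_⟩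
  · -- frequently divertable
    intro k _
    obtain ⟨i, h1, h2⟩ := LPath.psum_exists L hL k
    obtain ⟨hke, hkv⟩ := hyspec i k h1 h2
    set j : ℕ := k - LPath.psum L i with hj
    have hjL : j < L i := by
      have := LPath.psum_le L hL i
      have h3 : LPath.psum L (i + 1) = LPath.psum L i + L i := rfl
      omega
    refine ⟨(W i).shift j, Or.inl (LPath.shift_infinite _ (hWinf i) j), ?_, ?_⟩
    · rw [hkv]; rfl
    · have h4 : ((W i).shift j).shift (L i - j) = x.shift (Q (nseq i)) := by
        rw [LPath.shift_shift _ (hWinf i), show j + (L i - j) = L i by omega]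
        exact hZsh (nseq i)
      exact LPath.shiftEquiv_of_shift_eq
        (LPath.shift_infinite _ (hWinf i) j) hx _ _ h4
  · -- not shift equivalent to x
    rintro ⟨lag, p, q, -, -, -, hsh⟩
    set P := LPath.psum L with hPdef
    have hPp : p ≤ P p := LPath.psum_le L hL p
    set k : ℕ := P p with hk
    have hk2 : k < P (p + 1) := LPath.psum_strictMono L hL (Nat.lt_succ_self p)
    obtain ⟨hke, hkv⟩ := hyspec p k (le_refl k) hk2
    have hv1 : y.vert k = x.vert (nseq p) := by
      rw [hkv, Nat.sub_self]
      exact hWrng p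
    have hv2 : y.vert k = x.vert (q + (k - p)) := by
      have h1 : (y.shift p).vert (k - p) = (x.shift q).vert (k - p) :=
        congrArg (fun z => LPath.vert z (k - p)) hsh
      rw [LPath.shift_vert y hyinf, LPath.shift_vert x hx,
        show p + (k - p) = k by omega] at h1
      exact h1
    have hnq : nseq p = q + (k - p) := hxinj (hv1.symm.trans hv2)
    set d : ℕ := D (nseq p) with hd
    have hdL : d < L p := hZdp (nseq p)
    have hk3 : k + d < P (p + 1) := by
      have h3 : P (p + 1) = P p + L p := rfl
      omega
    obtain ⟨hke', -⟩ := hyspec p (k + d) (by omega) hk3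
    have he1 : y.edge (k + d) = (Z (nseq p)).edge d := by
      rw [hke', show k + d - P p = d by omega]
    have he2 : y.edge (k + d) = x.edge (nseq p + d) := by
      have h1 : (y.shift p).edge (k + d - p) = (x.shift q).edge (k + d - p) :=
        congrArg (fun z => LPath.edge z (k + d - p)) hsh
      have h2 : y.edge (p + (k + d - p)) = x.edge (q + (k + d - p)) := h1
      rw [show p + (k + d - p) = k + d by omega,
        show q + (k + d - p) = nseq p + d by omega] at h2
      exact h2
    exact hZdev (nseq p) (he1.symm.trans he2)
end
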